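/- A state q_f is coverable in a broadcast protocol P (over some topology) if and only if there exist k ∈ ℕ, y ∈ {r,b}, and 0 ≤ j ≤ k such that the state q_f^{y,j} (or q_f⁰) is coverable in the k-unfolding Pₖ of P. -/

import Mathlib

namespace BN

/-- Actions of a broadcast protocol: broadcast `!!m`, reception `?m`, internal `τ`. -/
inductive Act (M : Type) : Type where
  | brd : M → Act M
  | rcv : M → Act M
  | tau : Act M

/-- A broadcast protocol: an initial state and a set of transitions. -/
structure Protocol (Q M : Type) : Type where
  qin : Q
  delta : Set (Q × Act M × Q)

variable {Q M V : Type}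

/-- `q` has an outgoing reception of `m`. -/
def canRecv (P : Protocol Q M) (q : Q) (m : M) : Prop :=
  ∃ q', (q, Act.rcv m, q') ∈ P.delta

/-- One step of the broadcast network semantics over topology `G`,
performed by vertex `v` taking transition `t`. -/
def Step (G : SimpleGraph V) (P : Protocol Q M) (v : V)
    (t : Q × Act M × Q) (L L' : V → Q) : Prop :=
  t ∈ P.delta ∧ L v = t.1 ∧ L' v = t.2.2 ∧
  (match t.2.1 with
   | Act.tau => ∀ u, u ≠ v → L' u = L u
   | Act.brd m =>
       (∀ u, G.Adj v u →
          ((L u, Act.rcv m, L' u) ∈ P.delta ∨ (¬ canRecv P (L u) m ∧ L' u = L u))) ∧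
       (∀ u, u ≠ v → ¬ G.Adj v u → L' u = L u)
   | Act.rcv _ => False)

def StepAny (G : SimpleGraph V) (P : Protocol Q M) (L L' : V → Q) : Prop :=
  ∃ v t, Step G P v t L L'

def Reach (G : SimpleGraph V) (P : Protocol Q M) : (V → Q) → (V → Q) → Prop :=
  Relation.ReflTransGen (StepAny G P)

def initConf (P : Protocol Q M) : V → Q := fun _ => P.qin

/-- `qf` is coverable over the class of all (finite) graph topologies. -/
def Coverable (P : Protocol Q M) (qf : Q) : Prop :=
  ∃ (V' : Type) (_ : Fintype V') (G : SimpleGraph V') (L : V' → Q),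
    Reach G P (initConf P) L ∧ ∃ v, L v = qf

/-- A tree topology: a prefix-closed finite set of words over ℕ containing ε. -/
structure TreeTopo : Type where
  verts : Finset (List ℕ)
  nil_mem : ([] : List ℕ) ∈ verts
  prefixClosed : ∀ w ∈ verts, ∀ w' : List ℕ, w' <+: w → w' ∈ verts

abbrev TreeTopo.Vert (T : TreeTopo) : Type := {w : List ℕ // w ∈ T.verts}

def TreeTopo.root (T : TreeTopo) : T.Vert := ⟨[], T.nil_mem⟩

/-- The graph of a tree topology: each word `w ++ [x]` is adjacent to its parent `w`. -/
def TreeTopo.graph (T : TreeTopo) : SimpleGraph T.Vert where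
  Adj u v := (∃ x : ℕ, (v : List ℕ) = (u : List ℕ) ++ [x]) ∨
             (∃ x : ℕ, (u : List ℕ) = (v : List ℕ) ++ [x])
  symm := ⟨by intro u v h; exact h.symm⟩
  loopless := ⟨by
    intro u h
    rcases h with ⟨x, hx⟩ | ⟨x, hx⟩ <;> simpa using congrArg List.length hx⟩

def CoverableWith (T : TreeTopo) (P : Protocol Q M) (qf : Q) : Prop :=
  ∃ L : T.Vert → Q, Reach T.graph P (initConf P) L ∧ ∃ u, L u = qf

def CoverableTreeRoot (P : Protocol Q M) (qf : Q) : Prop :=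
  ∃ (T : TreeTopo) (L : T.Vert → Q),
    Reach T.graph P (initConf P) L ∧ L T.root = qf

/-- `(T, lam)` is the unfolding of graph `G` at vertex `v` to depth `n`. -/
structure IsUnfolding {V : Type} (G : SimpleGraph V) (v : V) (n : ℕ)
    (T : TreeTopo) (lam : T.Vert → V) : Prop where
  root_lbl : lam T.root = v
  depth_le : ∀ w ∈ T.verts, w.length ≤ n
  root_children :
    Set.BijOn lam {u : T.Vert | ∃ x : ℕ, (u : List ℕ) = [x]} (G.neighborSet v)
  children : ∀ (u : T.Vert) (w : List ℕ) (hw : w ∈ T.verts) (x : ℕ),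
      (u : List ℕ) = w ++ [x] → (u : List ℕ).length < n →
      Set.BijOn lam {u' : T.Vert | ∃ y : ℕ, (u' : List ℕ) = (u : List ℕ) ++ [y]}
        (G.neighborSet (lam u) \ {lam ⟨w, hw⟩})
  no_deep : ∀ u : T.Vert, n ≤ (u : List ℕ).length →
      ∀ x : ℕ, (u : List ℕ) ++ [x] ∉ T.verts

/-- Phase tags annotating states: `zero` (phase 0), broadcast phase `j`, reception phase `j`. -/
inductive PTag : Type where
  | zero : PTag
  | bph : ℕ → PTag
  | rph : ℕ → PTag
deriving DecidableEq

def bOf : ℕ → PTag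
  | 0 => .zero
  | j+1 => .bph (j+1)

def rOf : ℕ → PTag
  | 0 => .zero
  | j+1 => .rph (j+1)

/-- `φ` witnesses that `P` is `k`-phase-bounded. -/
def IsPhaseAssignment (k : ℕ) (P : Protocol Q M) (φ : Q → PTag) : Prop :=
  φ P.qin = .zero ∧
  (∀ q : Q, φ q = .zero ∨ ∃ j, 1 ≤ j ∧ j ≤ k ∧ (φ q = .bph j ∨ φ q = .rph j)) ∧
  ∀ t ∈ P.delta,
    (match t.2.1 with
     | Act.tau => φ t.1 = φ t.2.2
     | Act.brd _ =>
         (∃ j, 1 ≤ j ∧ j ≤ k ∧ φ t.1 = .bph j ∧ φ t.2.2 = .bph j) ∨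
         (∃ i, i < k ∧ φ t.1 = rOf i ∧ φ t.2.2 = .bph (i+1))
     | Act.rcv _ =>
         (∃ j, 1 ≤ j ∧ j ≤ k ∧ φ t.1 = .rph j ∧ φ t.2.2 = .rph j) ∨
         (∃ i, i < k ∧ φ t.1 = bOf i ∧ φ t.2.2 = .rph (i+1)) ∨
         (1 ≤ k ∧ φ t.1 = .bph k ∧ φ t.2.2 = .rph k))

def IsPhaseBounded (k : ℕ) (P : Protocol Q M) : Prop :=
  ∃ φ : Q → PTag, IsPhaseAssignment k P φ

/-- The `k`-unfolding `Pₖ` of a protocol `P`. -/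
def unfoldP (P : Protocol Q M) (k : ℕ) : Protocol (Q × PTag) M where
  qin := (P.qin, .zero)
  delta :=
    {t | ∃ q p, (q, Act.tau, p) ∈ P.delta ∧ t = ((q, .zero), Act.tau, (p, .zero))} ∪
    {t | ∃ q p α j, 1 ≤ j ∧ j ≤ k ∧ (q, α, p) ∈ P.delta ∧
        (α = Act.tau ∨ ∃ m, α = Act.rcv m) ∧ t = ((q, .rph j), α, (p, .rph j))} ∪
    {t | ∃ q p α j, 1 ≤ j ∧ j ≤ k ∧ (q, α, p) ∈ P.delta ∧
        (α = Act.tau ∨ ∃ m, α = Act.brd m) ∧ t = ((q, .bph j), α, (p, .bph j))} ∪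
    {t | ∃ q p m j, j < k ∧ (q, Act.brd m, p) ∈ P.delta ∧
        t = ((q, rOf j), Act.brd m, (p, .bph (j+1)))} ∪
    {t | ∃ q p m j, j < k ∧ (q, Act.rcv m, p) ∈ P.delta ∧
        t = ((q, bOf j), Act.rcv m, (p, .rph (j+1)))} ∪
    {t | ∃ q p m, 1 ≤ k ∧ (q, Act.rcv m, p) ∈ P.delta ∧
        t = ((q, .bph k), Act.rcv m, (p, .rph k))}

/-- Star topology: root `none` adjacent to every leaf `some i`, no other edges. -/
def starGraph (ι : Type) : SimpleGraph (Option ι) where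
  Adj u v := (u = none ∧ v ≠ none) ∨ (v = none ∧ u ≠ none)
  symm := ⟨by intro u v h; tauto⟩
  loopless := ⟨by intro u h; tauto⟩

/-- For a 1-phase-bounded protocol with witness `φ`, `Q^b = Q₀ ∪ Q₁^b`. -/
def Qb (φ : Q → PTag) : Set Q := {q | φ q = .zero ∨ φ q = .bph 1}

/-- The set component of the broadcast-print of a star configuration. -/
def bprintSet {ι : Type} (φ : Q → PTag) (L : Option ι → Q) : Set Q :=
  {q | q ∈ Qb φ ∧ ∃ i, L (some i) = q}

/-- The abstract transition relation `⇒` on broadcast-prints. -/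
def PrintStep (P : Protocol Q M) (φ : Q → PTag) :
    (Q × Set Q) → (Q × Set Q) → Prop := fun pr pr' =>
  ∃ (ι : Type) (_ : Fintype ι) (L L' : Option ι → Q),
    StepAny (starGraph ι) P L L' ∧ L none ∈ Qb φ ∧ L' none ∈ Qb φ ∧
    pr = (L none, bprintSet φ L) ∧ pr' = (L' none, bprintSet φ L')

/-- Line topology on `Fin ℓ`: consecutive vertices are adjacent. -/
def lineGraph (ℓ : ℕ) : SimpleGraph (Fin ℓ) where
  Adj i j := (i : ℕ) + 1 = (j : ℕ) ∨ (j : ℕ) + 1 = (i : ℕ)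
  symm := ⟨by intro i j h; tauto⟩
  loopless := ⟨by intro i h; rcases h with h | h <;> omega⟩

/-- `t` is a broadcast transition. -/
def IsBrdT (t : Q × Act M × Q) : Prop := ∃ m, t.2.1 = Act.brd m

/-- In the execution described by `vs, ts` of length `n`, `i` is the first index at
which vertex `u` performs a broadcast. -/
def IsFirstBrd {V' : Type} (vs : ℕ → V') (ts : ℕ → Q × Act M × Q) (n : ℕ)
    (u : V') (i : ℕ) : Prop :=
  i < n ∧ vs i = u ∧ IsBrdT (ts i) ∧ ∀ j < i, vs j = u → ¬ IsBrdT (ts j)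

/-- Every transition of `u` occurs no later than every broadcast of `w`
(i.e. lastBroadcast(u) ≤ firstBroadcast(w)). -/
def BrdOrder {V' : Type} (n : ℕ) (vs : ℕ → V') (ts : ℕ → Q × Act M × Q)
    (u w : V') : Prop :=
  ∀ j j', j < n → j' < n → vs j = u → vs j' = w → IsBrdT (ts j') → j ≤ j'

/-- One application of the pair-coverability operator. -/
def pairStep (P : Protocol Q M) (S : Set (Q × Q)) : Set (Q × Q) :=
  S ∪
  {p | ∃ p₁, (p₁, p.2) ∈ S ∧ (p₁, Act.tau, p.1) ∈ P.delta} ∪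
  {p | ∃ p₂, (p.1, p₂) ∈ S ∧ (p₂, Act.tau, p.2) ∈ P.delta} ∪
  {p | ∃ p₁ p₂ m, (p₁, p₂) ∈ S ∧ (p₂, Act.brd m, p.2) ∈ P.delta ∧
      (p₁, Act.rcv m, p.1) ∈ P.delta} ∪
  {p | ∃ p₂ m, (p.1, p₂) ∈ S ∧ (p₂, Act.brd m, p.2) ∈ P.delta ∧ ¬ canRecv P p.1 m} ∪
  {p | p.1 = P.qin ∧ ∃ q', (p.2, q') ∈ S}

/-- The iteration `S₀ ⊆ S₁ ⊆ …` of the pair-coverability operator. -/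
def Siter (P : Protocol Q M) : ℕ → Set (Q × Q)
  | 0 => {(P.qin, P.qin)}
  | i+1 => pairStep P (Siter P i)

/-! Every transition of `Pₖ` is a transition of `P` with phase tags attached, and a vertex can
receive `m` in `Pₖ` exactly when it can in `P`, whatever its tag (the receptions
`(q^{b,k}, ?m, p^{r,k})` cover the last broadcast phase). So erasing tags turns runs of `Pₖ`
into runs of `P`. Conversely, a run of `P` of length `n` lifts to `Pₖ` for every `k > n`: a
vertex moves to the next phase whenever it switches between broadcasting and receiving, which
happens at most once per step. -/

namespace PTag

def Bounded (n : ℕ) (τ : PTag) : Prop :=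
  τ = .zero ∨ ∃ j, 1 ≤ j ∧ j ≤ n ∧ (τ = .bph j ∨ τ = .rph j)

def advance : Act M → PTag → PTag
  | .tau, τ => τ
  | .brd _, .zero => .bph 1
  | .brd _, .rph j => .bph (j + 1)
  | .brd _, .bph j => .bph j
  | .rcv _, .zero => .rph 1
  | .rcv _, .bph j => .rph (j + 1)
  | .rcv _, .rph j => .rph j

variable {n m : ℕ} {τ : PTag}

theorem Bounded.mono (h : n ≤ m) (hτ : τ.Bounded n) : τ.Bounded m := by
  rcases hτ with h0 | ⟨j, h1, h2, h3⟩
  · exact Or.inl h0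
  · exact Or.inr ⟨j, h1, h2.trans h, h3⟩

theorem bounded_rOf (h : m ≤ n) : (rOf m).Bounded n := by
  cases m with
  | zero => exact Or.inl rfl
  | succ i => exact Or.inr ⟨i + 1, by omega, h, Or.inr rfl⟩

theorem bounded_bOf (h : m ≤ n) : (bOf m).Bounded n := by
  cases m with
  | zero => exact Or.inl rfl
  | succ i => exact Or.inr ⟨i + 1, by omega, h, Or.inl rfl⟩

theorem Bounded.advance (α : Act M) (hτ : τ.Bounded n) : (τ.advance α).Bounded (n + 1) := by
  rcases hτ with rfl | ⟨j, h1, h2, rfl | rfl⟩ <;> cases α <;>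
    simp [Bounded, PTag.advance] <;> omega

end PTag

section Unfolding

variable {P : Protocol Q M} {k : ℕ} {q p : Q} {m : M}

theorem mem_unfoldP_tau (h : (q, Act.tau, p) ∈ P.delta) :
    ((q, PTag.zero), Act.tau, (p, PTag.zero)) ∈ (unfoldP P k).delta := by
  simp only [unfoldP, Set.mem_union, Set.mem_ofPred_eq]
  exact Or.inl (Or.inl (Or.inl (Or.inl (Or.inl ⟨q, p, h, rfl⟩))))

theorem mem_unfoldP_rph {α : Act M} {j : ℕ} (hj1 : 1 ≤ j) (hj2 : j ≤ k)
    (h : (q, α, p) ∈ P.delta) (hα : α = Act.tau ∨ ∃ m, α = Act.rcv m) :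
    ((q, PTag.rph j), α, (p, PTag.rph j)) ∈ (unfoldP P k).delta := by
  simp only [unfoldP, Set.mem_union, Set.mem_ofPred_eq]
  exact Or.inl (Or.inl (Or.inl (Or.inl (Or.inr ⟨q, p, α, j, hj1, hj2, h, hα, rfl⟩))))

theorem mem_unfoldP_bph {α : Act M} {j : ℕ} (hj1 : 1 ≤ j) (hj2 : j ≤ k)
    (h : (q, α, p) ∈ P.delta) (hα : α = Act.tau ∨ ∃ m, α = Act.brd m) :
    ((q, PTag.bph j), α, (p, PTag.bph j)) ∈ (unfoldP P k).delta := by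
  simp only [unfoldP, Set.mem_union, Set.mem_ofPred_eq]
  exact Or.inl (Or.inl (Or.inl (Or.inr ⟨q, p, α, j, hj1, hj2, h, hα, rfl⟩)))

theorem mem_unfoldP_brd_rOf {j : ℕ} (hj : j < k) (h : (q, Act.brd m, p) ∈ P.delta) :
    ((q, rOf j), Act.brd m, (p, PTag.bph (j + 1))) ∈ (unfoldP P k).delta := by
  simp only [unfoldP, Set.mem_union, Set.mem_ofPred_eq]
  exact Or.inl (Or.inl (Or.inr ⟨q, p, m, j, hj, h, rfl⟩))

theorem mem_unfoldP_rcv_bOf {j : ℕ} (hj : j < k) (h : (q, Act.rcv m, p) ∈ P.delta) :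
    ((q, bOf j), Act.rcv m, (p, PTag.rph (j + 1))) ∈ (unfoldP P k).delta := by
  simp only [unfoldP, Set.mem_union, Set.mem_ofPred_eq]
  exact Or.inl (Or.inr ⟨q, p, m, j, hj, h, rfl⟩)

theorem mem_unfoldP_rcv_last (hk : 1 ≤ k) (h : (q, Act.rcv m, p) ∈ P.delta) :
    ((q, PTag.bph k), Act.rcv m, (p, PTag.rph k)) ∈ (unfoldP P k).delta := by
  simp only [unfoldP, Set.mem_union, Set.mem_ofPred_eq]
  exact Or.inr ⟨q, p, m, hk, h, rfl⟩

theorem mem_unfoldP_advance {α : Act M} {τ : PTag} {n : ℕ} (h : (q, α, p) ∈ P.delta)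
    (hτ : τ.Bounded n) (hn : n < k) :
    ((q, τ), α, (p, τ.advance α)) ∈ (unfoldP P k).delta := by
  rcases hτ with rfl | ⟨j, h1, h2, rfl | rfl⟩ <;> cases α
  case inl.tau => exact mem_unfoldP_tau h
  case inl.brd => exact mem_unfoldP_brd_rOf (j := 0) (by omega) h
  case inl.rcv => exact mem_unfoldP_rcv_bOf (j := 0) (by omega) h
  case inr.inl.tau => exact mem_unfoldP_bph h1 (by omega) h (Or.inl rfl)
  case inr.inl.brd => exact mem_unfoldP_bph h1 (by omega) h (Or.inr ⟨_, rfl⟩)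
  case inr.inl.rcv =>
    obtain ⟨i, rfl⟩ := Nat.exists_eq_add_of_le' h1
    exact mem_unfoldP_rcv_bOf (j := i + 1) (by omega) h
  case inr.inr.tau => exact mem_unfoldP_rph h1 (by omega) h (Or.inl rfl)
  case inr.inr.brd =>
    obtain ⟨i, rfl⟩ := Nat.exists_eq_add_of_le' h1
    exact mem_unfoldP_brd_rOf (j := i + 1) (by omega) h
  case inr.inr.rcv => exact mem_unfoldP_rph h1 (by omega) h (Or.inr ⟨_, rfl⟩)

theorem proj_mem_of_mem_unfoldP {t : (Q × PTag) × Act M × (Q × PTag)}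
    (ht : t ∈ (unfoldP P k).delta) :
    (t.1.1, t.2.1, t.2.2.1) ∈ P.delta ∧ t.1.2.Bounded k ∧ t.2.2.2.Bounded k ∧
      (t.2.1 = Act.tau ∨ 1 ≤ k) := by
  simp only [unfoldP, Set.mem_union, Set.mem_ofPred_eq] at ht
  rcases ht with (((((⟨q, p, hd, rfl⟩ | ⟨q, p, α, j, h1, h2, hd, -, rfl⟩) |
      ⟨q, p, α, j, h1, h2, hd, -, rfl⟩) | ⟨q, p, m, j, hj, hd, rfl⟩) |
      ⟨q, p, m, j, hj, hd, rfl⟩) | ⟨q, p, m, hk, hd, rfl⟩)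
  · exact ⟨hd, Or.inl rfl, Or.inl rfl, Or.inl rfl⟩
  · exact ⟨hd, Or.inr ⟨j, h1, h2, Or.inr rfl⟩, Or.inr ⟨j, h1, h2, Or.inr rfl⟩, by omega⟩
  · exact ⟨hd, Or.inr ⟨j, h1, h2, Or.inl rfl⟩, Or.inr ⟨j, h1, h2, Or.inl rfl⟩, by omega⟩
  · exact ⟨hd, PTag.bounded_rOf hj.le, Or.inr ⟨j + 1, by omega, hj, Or.inl rfl⟩, by omega⟩
  · exact ⟨hd, PTag.bounded_bOf hj.le, Or.inr ⟨j + 1, by omega, hj, Or.inr rfl⟩, by omega⟩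
  · exact ⟨hd, Or.inr ⟨k, hk, le_rfl, Or.inl rfl⟩, Or.inr ⟨k, hk, le_rfl, Or.inr rfl⟩,
      Or.inr hk⟩

theorem canRecv_unfoldP_iff {τ : PTag} (hk : 1 ≤ k) (hτ : τ.Bounded k) :
    canRecv (unfoldP P k) (q, τ) m ↔ canRecv P q m := by
  refine ⟨fun ⟨q', hq'⟩ => ⟨q'.1, (proj_mem_of_mem_unfoldP hq').1⟩, fun ⟨q', hq'⟩ => ?_⟩
  by_cases hlast : τ = .bph k
  · exact ⟨_, hlast ▸ mem_unfoldP_rcv_last hk hq'⟩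
  · rcases hτ with rfl | ⟨j, h1, h2, rfl | rfl⟩
    · exact ⟨_, mem_unfoldP_advance hq' (Or.inl rfl : PTag.zero.Bounded 0) hk⟩
    · have hj : j < k := lt_of_le_of_ne h2 (by rintro rfl; exact hlast rfl)
      exact ⟨_, mem_unfoldP_advance hq' (Or.inr ⟨j, h1, le_rfl, Or.inl rfl⟩) hj⟩
    · exact ⟨_, mem_unfoldP_rph h1 h2 hq' (Or.inr ⟨m, rfl⟩)⟩

end Unfolding

section Runs

variable {P : Protocol Q M} {k : ℕ} {G : SimpleGraph V}

theorem Step.tags_bounded_unfoldP {v : V} {t : (Q × PTag) × Act M × (Q × PTag)}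
    {L L' : V → Q × PTag} (h : Step G (unfoldP P k) v t L L')
    (hL : ∀ u, (L u).2.Bounded k) (u : V) : (L' u).2.Bounded k := by
  obtain ⟨⟨q, τq⟩, α, p, τp⟩ := t
  obtain ⟨hd, -, hv, hrest⟩ := h
  by_cases huv : u = v
  · subst huv; rw [hv]; exact (proj_mem_of_mem_unfoldP hd).2.2.1
  cases α with
  | tau => rw [hrest u huv]; exact hL u
  | rcv m => exact hrest.elim
  | brd m =>
    by_cases hadj : G.Adj v u
    · rcases hrest.1 u hadj with hrcv | ⟨-, hu⟩
      · exact (proj_mem_of_mem_unfoldP hrcv).2.2.1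
      · rw [hu]; exact hL u
    · rw [hrest.2 u huv hadj]; exact hL u

theorem Step.proj_unfoldP {v : V} {t : (Q × PTag) × Act M × (Q × PTag)}
    {L L' : V → Q × PTag} (h : Step G (unfoldP P k) v t L L')
    (hL : ∀ u, (L u).2.Bounded k) :
    Step G P v (t.1.1, t.2.1, t.2.2.1) (fun u => (L u).1) (fun u => (L' u).1) := by
  obtain ⟨⟨q, τq⟩, α, p, τp⟩ := t
  obtain ⟨hd, hv, hv', hrest⟩ := h
  obtain ⟨hdP, -, -, htau_or⟩ := proj_mem_of_mem_unfoldP hd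
  refine ⟨hdP, congrArg Prod.fst hv, congrArg Prod.fst hv', ?_⟩
  cases α with
  | tau => exact fun u hu => congrArg Prod.fst (hrest u hu)
  | rcv m => exact hrest.elim
  | brd m =>
    have hk : 1 ≤ k := htau_or.resolve_left (by simp)
    refine ⟨fun u hadj => ?_, fun u hu hnadj => congrArg Prod.fst (hrest.2 u hu hnadj)⟩
    rcases hrest.1 u hadj with hrcv | ⟨hnc, hu⟩
    · exact Or.inl (proj_mem_of_mem_unfoldP hrcv).1
    · exact Or.inr ⟨fun hc => hnc ((canRecv_unfoldP_iff hk (hL u)).2 hc),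
        congrArg Prod.fst hu⟩

theorem Reach.tags_bounded_unfoldP {L : V → Q × PTag}
    (h : Reach G (unfoldP P k) (initConf (unfoldP P k)) L) (u : V) : (L u).2.Bounded k := by
  induction h generalizing u with
  | refl => exact Or.inl rfl
  | tail _ hstep ih =>
    obtain ⟨v, t, hs⟩ := hstep
    exact hs.tags_bounded_unfoldP ih u

theorem Reach.proj_unfoldP {L : V → Q × PTag}
    (h : Reach G (unfoldP P k) (initConf (unfoldP P k)) L) :
    Reach G P (initConf P) (fun u => (L u).1) := by
  induction h with
  | refl => exact .refl
  | tail hreach hstep ih =>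
    obtain ⟨v, t, hs⟩ := hstep
    exact .tail ih ⟨v, _, hs.proj_unfoldP (Reach.tags_bounded_unfoldP hreach)⟩

theorem Step.lift_unfoldP {v : V} {t : Q × Act M × Q} {L L' : V → Q} {n : ℕ}
    (h : Step G P v t L L') {tag : V → PTag} (htag : ∀ u, (tag u).Bounded n) (hn : n < k) :
    ∃ tag' : V → PTag,
      StepAny G (unfoldP P k) (fun u => (L u, tag u)) (fun u => (L' u, tag' u)) ∧
      ∀ u, (tag' u).Bounded (n + 1) := by
  classical
  obtain ⟨q, α, p⟩ := t
  obtain ⟨hd, hv, hv', hrest⟩ := h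
  have hmem := mem_unfoldP_advance hd (htag v) hn
  cases α with
  | tau =>
    exact ⟨tag, ⟨v, _, hmem, by simp [hv], by simp [hv', PTag.advance], fun u hu => by simp [hrest u hu]⟩,
      fun u => (htag u).mono n.le_succ⟩
  | rcv m => exact hrest.elim
  | brd m =>
    let tag' : V → PTag := fun u =>
      if u = v then (tag v).advance (.brd m)
      else if G.Adj v u ∧ canRecv P (L u) m then (tag u).advance (.rcv m) else tag u
    refine ⟨tag', ⟨v, _, hmem, by simp [hv], by simp [tag', hv'], ?_, ?_⟩, ?_⟩
    · intro u hadj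
      have huv : u ≠ v := (G.ne_of_adj hadj).symm
      rcases hrest.1 u hadj with hrcv | ⟨hnc, hu⟩
      · have htu : tag' u = (tag u).advance (.rcv m) := by
          simp [tag', huv, hadj, show canRecv P (L u) m from ⟨_, hrcv⟩]
        left
        simpa only [htu] using mem_unfoldP_advance hrcv (htag u) hn
      · refine Or.inr ⟨?_, by simp [tag', huv, hnc, hu]⟩
        rwa [canRecv_unfoldP_iff (by omega) ((htag u).mono hn.le)]
    · intro u hu hnadj
      simp [tag', hu, hnadj, hrest.2 u hu hnadj]
    · intro u
      by_cases huv : u = v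
      · simp only [tag', if_pos huv]; exact (htag v).advance _
      by_cases hrcv : G.Adj v u ∧ canRecv P (L u) m
      · simp only [tag', if_neg huv, if_pos hrcv]; exact (htag u).advance _
      · simp only [tag', if_neg huv, if_neg hrcv]; exact (htag u).mono n.le_succ

theorem Reach.lift_unfoldP {L : V → Q} (h : Reach G P (initConf P) L) :
    ∃ n, ∀ k, n < k → ∃ tag : V → PTag,
      Reach G (unfoldP P k) (initConf (unfoldP P k)) (fun u => (L u, tag u)) ∧
      ∀ u, (tag u).Bounded n := by
  induction h with
  | refl => exact ⟨0, fun k _ => ⟨fun _ => .zero, .refl, fun _ => Or.inl rfl⟩⟩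
  | tail _ hstep ih =>
    obtain ⟨n, hn⟩ := ih
    obtain ⟨v, t, hs⟩ := hstep
    refine ⟨n + 1, fun k hk => ?_⟩
    obtain ⟨tag, hreach, htag⟩ := hn k (by omega)
    obtain ⟨tag', hs', htag'⟩ := hs.lift_unfoldP (k := k) htag (by omega)
    exact ⟨tag', .tail hreach hs', htag'⟩

end Runs

/-- `qf` is coverable in `P` iff some phase-annotated copy of `qf`
is coverable in some k-unfolding of `P`. -/
theorem cover_iff_cover_unfold {Q M : Type} (P : Protocol Q M) (qf : Q) :
    Coverable P qf ↔
      ∃ (k : ℕ) (tag : PTag),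
        (tag = .zero ∨ ∃ j, 1 ≤ j ∧ j ≤ k ∧ (tag = .bph j ∨ tag = .rph j)) ∧
        Coverable (unfoldP P k) (qf, tag) := by
  constructor
  · rintro ⟨V', hV', G, L, hreach, v, rfl⟩
    obtain ⟨n, hn⟩ := Reach.lift_unfoldP hreach
    obtain ⟨tag, hreach', htag⟩ := hn (n + 1) n.lt_succ_self
    exact ⟨n + 1, tag v, (htag v).mono n.le_succ, V', hV', G, _, hreach', v, rfl⟩
  · rintro ⟨k, tag, -, V', hV', G, L, hreach, v, hv⟩
    exact ⟨V', hV', G, _, Reach.proj_unfoldP hreach, v, congrArg Prod.fst hv⟩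

end BN
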